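/- For a lasso trace σ = uv^ω and any LTL formula φ: σ ⊨ GFφ if and only if φ holds at some position i with |u| ≤ i < |u| + |v|; and σ ⊨ FGφ if and only if φ holds at every position i with |u| ≤ i < |u| + |v|. -/
import Mathlib

inductive LTL (AP : Type) : Type where
  | atom : AP → LTL AP
  | neg : LTL AP → LTL AP
  | and : LTL AP → LTL AP → LTL AP
  | or : LTL AP → LTL AP → LTL AP
  | imp : LTL AP → LTL AP → LTL AP
  | next : LTL AP → LTL AP
  | fut : LTL AP → LTL AP
  | glob : LTL AP → LTL AP
  | until_ : LTL AP → LTL AP → LTL AP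

def sat {AP : Type} (σ : ℕ → Set AP) : LTL AP → ℕ → Prop
  | .atom p, i => p ∈ σ i
  | .neg φ, i => ¬ sat σ φ i
  | .and φ ψ, i => sat σ φ i ∧ sat σ ψ i
  | .or φ ψ, i => sat σ φ i ∨ sat σ ψ i
  | .imp φ ψ, i => sat σ φ i → sat σ ψ i
  | .next φ, i => sat σ φ (i + 1)
  | .fut φ, i => ∃ j, i ≤ j ∧ sat σ φ j
  | .glob φ, i => ∀ j, i ≤ j → sat σ φ j
  | .until_ φ ψ, i => ∃ j, i ≤ j ∧ sat σ ψ j ∧ ∀ k, i ≤ k → k < j → sat σ φ k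

def lasso {AP : Type} (u v : List (Set AP)) : ℕ → Set AP :=
  fun i => if i < u.length then u.getD i ∅
           else v.getD ((i - u.length) % v.length) ∅

lemma lasso_shift {AP : Type} (u v : List (Set AP)) (i : ℕ) (hi : u.length ≤ i) :
    lasso u v (i + v.length) = lasso u v i := by
  unfold lasso
  rw [if_neg (by omega), if_neg (by omega)]
  congr 1
  have : i + v.length - u.length = (i - u.length) + v.length := by omega
  rw [this, Nat.add_mod_right]

lemma sat_shift {AP : Type} (u v : List (Set AP)) (φ : LTL AP) :
    ∀ i, u.length ≤ i → (sat (lasso u v) φ (i + v.length) ↔ sat (lasso u v) φ i) := by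
  induction φ with
  | atom p => intro i hi; simp only [sat, lasso_shift u v i hi]
  | neg φ ih => intro i hi; simp only [sat, ih i hi]
  | and φ ψ ih1 ih2 => intro i hi; simp only [sat, ih1 i hi, ih2 i hi]
  | or φ ψ ih1 ih2 => intro i hi; simp only [sat, ih1 i hi, ih2 i hi]
  | imp φ ψ ih1 ih2 => intro i hi; simp only [sat, ih1 i hi, ih2 i hi]
  | next φ ih =>
    intro i hi
    have := ih (i + 1) (by omega)
    simpa [sat, Nat.add_right_comm] using this
  | fut φ ih =>
    intro i hi
    constructor
    · rintro ⟨j, hj, hs⟩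
      exact ⟨j - v.length, by omega, by
        have := ih (j - v.length) (by omega)
        rw [← this]; convert hs using 2; omega⟩
    · rintro ⟨j, hj, hs⟩
      exact ⟨j + v.length, by omega, (ih j (by omega)).mpr hs⟩
  | glob φ ih =>
    intro i hi
    constructor
    · intro h j hj
      have := h (j + v.length) (by omega)
      exact (ih j (by omega)).mp this
    · intro h j hj
      have := h (j - v.length) (by omega)
      have h2 := (ih (j - v.length) (by omega)).mpr this
      convert h2 using 2; omega
  | until_ φ ψ ih1 ih2 =>
    intro i hi
    constructor
    · rintro ⟨j, hj, hs, hk⟩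
      refine ⟨j - v.length, by omega, ?_, ?_⟩
      · have := ih2 (j - v.length) (by omega)
        rw [← this]; convert hs using 2; omega
      · intro k hk1 hk2
        have := hk (k + v.length) (by omega) (by omega)
        exact (ih1 k (by omega)).mp this
    · rintro ⟨j, hj, hs, hk⟩
      refine ⟨j + v.length, by omega, (ih2 j (by omega)).mpr hs, ?_⟩
      intro k hk1 hk2
      have := hk (k - v.length) (by omega) (by omega)
      have h2 := (ih1 (k - v.length) (by omega)).mpr this
      convert h2 using 2; omega

lemma sat_shift_mul {AP : Type} (u v : List (Set AP)) (φ : LTL AP) (m : ℕ) :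
    ∀ i, u.length ≤ i → (sat (lasso u v) φ (i + m * v.length) ↔ sat (lasso u v) φ i) := by
  induction m with
  | zero => simp
  | succ m ih =>
    intro i hi
    have h1 := sat_shift u v φ (i + m * v.length) (by omega)
    have : i + (m + 1) * v.length = i + m * v.length + v.length := by ring
    rw [this, h1, ih i hi]

lemma sat_reduce {AP : Type} (u v : List (Set AP)) (hv : v ≠ []) (φ : LTL AP)
    (k : ℕ) (hk : u.length ≤ k) :
    sat (lasso u v) φ k ↔ sat (lasso u v) φ (u.length + (k - u.length) % v.length) := by
  have hL : 0 < v.length := List.length_pos_iff.mpr hv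
  have hd := Nat.div_add_mod (k - u.length) v.length
  have hc := Nat.mul_comm ((k - u.length) / v.length) v.length
  have hk2 : (u.length + (k - u.length) % v.length) + ((k - u.length) / v.length) * v.length = k := by
    omega
  have h2 := sat_shift_mul u v φ ((k - u.length) / v.length)
    (u.length + (k - u.length) % v.length) (by omega)
  rw [hk2] at h2
  exact h2

theorem lasso_GF_FG {AP : Type} (u v : List (Set AP)) (hv : v ≠ []) (φ : LTL AP) :
    (sat (lasso u v) (.glob (.fut φ)) 0 ↔
      ∃ i, u.length ≤ i ∧ i < u.length + v.length ∧ sat (lasso u v) φ i) ∧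
    (sat (lasso u v) (.fut (.glob φ)) 0 ↔
      ∀ i, u.length ≤ i → i < u.length + v.length → sat (lasso u v) φ i) := by
  have hL : 0 < v.length := List.length_pos_iff.mpr hv
  constructor
  · constructor
    · intro h
      obtain ⟨k, hk, hs⟩ := h u.length (by omega)
      refine ⟨u.length + (k - u.length) % v.length, by omega,
        by have := Nat.mod_lt (k - u.length) hL; omega,
        (sat_reduce u v hv φ k hk).mp hs⟩
    · rintro ⟨i, hi1, hi2, hs⟩ j hj
      obtain ⟨m, hm⟩ : ∃ m : ℕ, j ≤ i + m * v.length :=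
        ⟨j, by nlinarith⟩
      exact ⟨i + m * v.length, hm, (sat_shift_mul u v φ m i hi1).mpr hs⟩
  · constructor
    · rintro ⟨j, hj, h⟩ i hi1 hi2
      obtain ⟨m, hm⟩ : ∃ m : ℕ, j ≤ i + m * v.length :=
        ⟨j, by nlinarith⟩
      have := h (i + m * v.length) hm
      exact (sat_shift_mul u v φ m i hi1).mp this
    · intro h
      refine ⟨u.length, by omega, ?_⟩
      intro k hk
      rw [sat_reduce u v hv φ k hk]
      exact h _ (by omega) (by have := Nat.mod_lt (k - u.length) hL; omega)
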